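/- Let 0 < τ < 1 and let z₊, z₋ ∈ ℂ∖{−√2, √2}. Choose complex numbers s₊, s₋ with s₊² = z₊² − 2 and s₋² = z₋² − 2, and set a = (z₊+s₊)(z₋+s₋)/2 and b = (z₊+s₊)(z₋−s₋)/2 (the set {a, a⁻¹, b, b⁻¹} does not depend on the choices of square roots). Let F'(s) = (z₊+z₋)²/(2(1+s)²) − (z₊−z₋)²/(2(1−s)²) − 1/s on ℂ∖{0, 1, −1}. Then: (i) if z₊ ≠ z₋ and z₊ ≠ −z₋, the set {s ∈ ℂ∖{0,1,−1} : F'(s) = 0} equals {a, a⁻¹, b, b⁻¹}, and F''(s) ≠ 0 at each of these four points; (ii) if z₊ = ε·z₋ with ε ∈ {1, −1} and z₊ ≠ 0, the set {s ∈ ℂ∖{0,1,−1} : F'(s) = 0} equals {ε(z₊+s₊)²/2, ε(z₊−s₊)²/2}, which are two distinct points, each the reciprocal of the other, and F'' ≠ 0 at both. -/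
import Mathlib

open scoped BigOperators Real
open ComplexConjugate

/-- The derivative `F'` of the phase function. -/
noncomputable def Fd1 (zp zm s : ℂ) : ℂ :=
  (zp + zm) ^ 2 / (2 * (1 + s) ^ 2) - (zp - zm) ^ 2 / (2 * (1 - s) ^ 2) - 1 / s

/-- The second derivative `F''` of the phase function. -/
noncomputable def Fd2 (zp zm s : ℂ) : ℂ :=
  -(zp + zm) ^ 2 / (1 + s) ^ 3 - (zp - zm) ^ 2 / (1 - s) ^ 3 + 1 / s ^ 2

/-- The saddle-point polynomial. -/
noncomputable def Qp (zp zm s : ℂ) : ℂ :=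
  s ^ 4 - 2 * zp * zm * s ^ 3 + (2 * zp ^ 2 + 2 * zm ^ 2 - 2) * s ^ 2 - 2 * zp * zm * s + 1

/-- Derivative of the saddle-point polynomial. -/
noncomputable def Qd (zp zm s : ℂ) : ℂ :=
  4 * s ^ 3 - 6 * zp * zm * s ^ 2 + (4 * zp ^ 2 + 4 * zm ^ 2 - 4) * s - 2 * zp * zm

lemma Fd1_eq (zp zm s : ℂ) (h0 : s ≠ 0) (h1 : (1 : ℂ) - s ≠ 0) (h2 : (1 : ℂ) + s ≠ 0) :
    Fd1 zp zm s = -(Qp zp zm s) / (s * (1 + s) ^ 2 * (1 - s) ^ 2) := by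
  have hb1 : (2:ℂ) * (1 + s) ^ 2 ≠ 0 := mul_ne_zero two_ne_zero (pow_ne_zero _ h2)
  have hb2 : (2:ℂ) * (1 - s) ^ 2 ≠ 0 := mul_ne_zero two_ne_zero (pow_ne_zero _ h1)
  have hb3 : (2:ℂ) * (1 + s) ^ 2 * (2 * (1 - s) ^ 2) ≠ 0 := mul_ne_zero hb1 hb2
  have hb4 : (2:ℂ) * (1 + s) ^ 2 * (2 * (1 - s) ^ 2) * s ≠ 0 := mul_ne_zero hb3 h0
  have hden : s * (1 + s) ^ 2 * (1 - s) ^ 2 ≠ 0 :=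
    mul_ne_zero (mul_ne_zero h0 (pow_ne_zero _ h2)) (pow_ne_zero _ h1)
  rw [Fd1, Qp, div_sub_div _ _ hb1 hb2, div_sub_div _ _ hb3 h0, div_eq_div_iff hb4 hden]
  ring

lemma Fd1_zero_iff (zp zm s : ℂ) (h0 : s ≠ 0) (h1 : (1 : ℂ) - s ≠ 0) (h2 : (1 : ℂ) + s ≠ 0) :
    Fd1 zp zm s = 0 ↔ Qp zp zm s = 0 := by
  have hden : s * (1 + s) ^ 2 * (1 - s) ^ 2 ≠ 0 :=
    mul_ne_zero (mul_ne_zero h0 (pow_ne_zero _ h2)) (pow_ne_zero _ h1)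
  rw [Fd1_eq zp zm s h0 h1 h2, div_eq_zero_iff, neg_eq_zero]
  tauto

lemma Fd2_eq (zp zm s : ℂ) (h0 : s ≠ 0) (h1 : (1 : ℂ) - s ≠ 0) (h2 : (1 : ℂ) + s ≠ 0) :
    Fd2 zp zm s = (-(Qd zp zm s) * (s * (1 - s ^ 2)) + Qp zp zm s * (1 - 5 * s ^ 2)) /
      (s ^ 2 * (1 + s) ^ 3 * (1 - s) ^ 3) := by
  have hc1 : ((1:ℂ) + s) ^ 3 ≠ 0 := pow_ne_zero _ h2
  have hc2 : ((1:ℂ) - s) ^ 3 ≠ 0 := pow_ne_zero _ h1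
  have hc3 : ((1:ℂ) + s) ^ 3 * (1 - s) ^ 3 ≠ 0 := mul_ne_zero hc1 hc2
  have hs2 : s ^ 2 ≠ 0 := pow_ne_zero _ h0
  have hc4 : ((1:ℂ) + s) ^ 3 * (1 - s) ^ 3 * s ^ 2 ≠ 0 := mul_ne_zero hc3 hs2
  have hden : s ^ 2 * (1 + s) ^ 3 * (1 - s) ^ 3 ≠ 0 :=
    mul_ne_zero (mul_ne_zero hs2 hc1) hc2
  rw [Fd2, Qp, Qd, div_sub_div _ _ hc1 hc2, div_add_div _ _ hc3 hs2, div_eq_div_iff hc4 hden]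
  ring

/-- Saddle points of the phase function, generic cases (i) and (ii). -/
theorem stmt_4 (τ : ℝ) (hτ0 : 0 < τ) (hτ1 : τ < 1) (zp zm sp sm : ℂ)
    (hzp1 : zp ≠ -(Real.sqrt 2 : ℂ)) (hzp2 : zp ≠ (Real.sqrt 2 : ℂ))
    (hzm1 : zm ≠ -(Real.sqrt 2 : ℂ)) (hzm2 : zm ≠ (Real.sqrt 2 : ℂ))
    (hsp : sp ^ 2 = zp ^ 2 - 2) (hsm : sm ^ 2 = zm ^ 2 - 2)
    (a b : ℂ) (ha : a = (zp + sp) * (zm + sm) / 2) (hb : b = (zp + sp) * (zm - sm) / 2) :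
    -- (i)
    ((zp ≠ zm ∧ zp ≠ -zm) →
      ({s : ℂ | s ≠ 0 ∧ s ≠ 1 ∧ s ≠ -1 ∧ Fd1 zp zm s = 0} = {a, a⁻¹, b, b⁻¹} ∧
        ∀ s ∈ ({a, a⁻¹, b, b⁻¹} : Set ℂ), Fd2 zp zm s ≠ 0)) ∧
    -- (ii)
    (∀ ε : ℂ, (ε = 1 ∨ ε = -1) → zp = ε * zm → zp ≠ 0 →
      ({s : ℂ | s ≠ 0 ∧ s ≠ 1 ∧ s ≠ -1 ∧ Fd1 zp zm s = 0} =
          {ε * (zp + sp) ^ 2 / 2, ε * (zp - sp) ^ 2 / 2} ∧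
        ε * (zp + sp) ^ 2 / 2 ≠ ε * (zp - sp) ^ 2 / 2 ∧
        (ε * (zp + sp) ^ 2 / 2) * (ε * (zp - sp) ^ 2 / 2) = 1 ∧
        Fd2 zp zm (ε * (zp + sp) ^ 2 / 2) ≠ 0 ∧
        Fd2 zp zm (ε * (zp - sp) ^ 2 / 2) ≠ 0)) := by
  have h2C : ((Real.sqrt 2 : ℝ) : ℂ) ^ 2 = 2 := by
    rw [← Complex.ofReal_pow, Real.sq_sqrt (by norm_num : (0:ℝ) ≤ 2)]
    norm_num
  have hsp0 : sp ≠ 0 := by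
    intro h
    have h2 : zp ^ 2 - 2 = 0 := by rw [← hsp, h]; ring
    have hmul : (zp - (Real.sqrt 2 : ℂ)) * (zp + (Real.sqrt 2 : ℂ)) = 0 := by
      linear_combination h2 - h2C
    rcases mul_eq_zero.mp hmul with h' | h'
    · exact hzp2 (by linear_combination h')
    · exact hzp1 (by linear_combination h')
  have hsm0 : sm ≠ 0 := by
    intro h
    have h2 : zm ^ 2 - 2 = 0 := by rw [← hsm, h]; ring
    have hmul : (zm - (Real.sqrt 2 : ℂ)) * (zm + (Real.sqrt 2 : ℂ)) = 0 := by
      linear_combination h2 - h2C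
    rcases mul_eq_zero.mp hmul with h' | h'
    · exact hzm2 (by linear_combination h')
    · exact hzm1 (by linear_combination h')
  have hzpsp : (zp + sp) * (zp - sp) = 2 := by linear_combination -hsp
  have hzmsm : (zm + sm) * (zm - sm) = 2 := by linear_combination -hsm
  have hzpspne : zp + sp ≠ 0 := by
    intro h; rw [h, zero_mul] at hzpsp; norm_num at hzpsp
  have hzpsmne : zp - sp ≠ 0 := by
    intro h; rw [h, mul_zero] at hzpsp; norm_num at hzpsp
  have hzmsmne : zm + sm ≠ 0 := by
    intro h; rw [h, zero_mul] at hzmsm; norm_num at hzmsm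
  have hzmsmne' : zm - sm ≠ 0 := by
    intro h; rw [h, mul_zero] at hzmsm; norm_num at hzmsm
  -- generic `Fd2 ≠ 0` criterion
  have hFd2ne : ∀ t : ℂ, t ≠ 0 → t ≠ 1 → t ≠ -1 → Qp zp zm t = 0 → Qd zp zm t ≠ 0 →
      Fd2 zp zm t ≠ 0 := by
    intro t ht0 ht1 htm1 hQ hQdn
    have h1s : (1 : ℂ) - t ≠ 0 := sub_ne_zero.mpr (Ne.symm ht1)
    have h2s : (1 : ℂ) + t ≠ 0 := fun h => htm1 (by linear_combination h)
    rw [Fd2_eq zp zm t ht0 h1s h2s]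
    apply div_ne_zero
    · have hnum : -(Qd zp zm t) * (t * (1 - t ^ 2)) + Qp zp zm t * (1 - 5 * t ^ 2) =
          -(Qd zp zm t) * (t * ((1 - t) * (1 + t))) := by rw [hQ]; ring
      rw [hnum]
      exact mul_ne_zero (neg_ne_zero.mpr hQdn)
        (mul_ne_zero ht0 (mul_ne_zero h1s h2s))
    · exact mul_ne_zero (mul_ne_zero (pow_ne_zero _ ht0) (pow_ne_zero _ h2s)) (pow_ne_zero _ h1s)
  constructor
  · -- case (i)
    rintro ⟨hne1, hne2⟩
    have hz1 : zp - zm ≠ 0 := sub_ne_zero.mpr hne1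
    have hz2 : zp + zm ≠ 0 := by intro h; exact hne2 (by linear_combination h)
    set A : ℂ := (zp - sp) * (zm - sm) / 2 with hA
    set B : ℂ := (zp - sp) * (zm + sm) / 2 with hB
    have haa : a * A = 1 := by
      rw [ha, hA]
      linear_combination ((1/4)*sm^2 + (-1/4)*zm^2) * hsp + (-(1/2)) * hsm
    have hbb : b * B = 1 := by
      rw [hb, hB]
      linear_combination ((1/4)*sm^2 + (-1/4)*zm^2) * hsp + (-(1/2)) * hsm
    have hainv : a⁻¹ = A := inv_eq_of_mul_eq_one_right haa
    have hbinv : b⁻¹ = B := inv_eq_of_mul_eq_one_right hbb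
    have ha0 : a ≠ 0 := left_ne_zero_of_mul_eq_one haa
    have hA0 : A ≠ 0 := right_ne_zero_of_mul_eq_one haa
    have hb0 : b ≠ 0 := left_ne_zero_of_mul_eq_one hbb
    have hB0 : B ≠ 0 := right_ne_zero_of_mul_eq_one hbb
    have hkey : (sp * zm + zp * sm) * (sp * zm - zp * sm) = 2 * (zp - zm) * (zp + zm) := by
      linear_combination (zm ^ 2) * hsp + (-(zp ^ 2)) * hsm
    have hdne1 : sp * zm + zp * sm ≠ 0 := by
      intro h; rw [h, zero_mul] at hkey
      exact (mul_ne_zero (mul_ne_zero two_ne_zero hz1) hz2) hkey.symm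
    have hdne2 : sp * zm - zp * sm ≠ 0 := by
      intro h; rw [h, mul_zero] at hkey
      exact (mul_ne_zero (mul_ne_zero two_ne_zero hz1) hz2) hkey.symm
    have hd1 : a - A = sp * zm + zp * sm := by rw [ha, hA]; ring
    have hd2 : b - B = sp * zm - zp * sm := by rw [hb, hB]; ring
    have hd3 : a - b = (zp + sp) * sm := by rw [ha, hb]; ring
    have hd4 : a - B = sp * (zm + sm) := by rw [ha, hB]; ring
    have hd5 : A - b = -(sp * (zm - sm)) := by rw [hA, hb]; ring
    have hd6 : A - B = -((zp - sp) * sm) := by rw [hA, hB]; ring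
    have hd1ne : a - A ≠ 0 := by rw [hd1]; exact hdne1
    have hd2ne : b - B ≠ 0 := by rw [hd2]; exact hdne2
    have hd3ne : a - b ≠ 0 := by rw [hd3]; exact mul_ne_zero hzpspne hsm0
    have hd4ne : a - B ≠ 0 := by rw [hd4]; exact mul_ne_zero hsp0 hzmsmne
    have hd5ne : A - b ≠ 0 := by
      rw [hd5]; exact neg_ne_zero.mpr (mul_ne_zero hsp0 hzmsmne')
    have hd6ne : A - B ≠ 0 := by
      rw [hd6]; exact neg_ne_zero.mpr (mul_ne_zero hzpsmne hsm0)
    have hfac : ∀ t : ℂ, Qp zp zm t = (t - a) * (t - A) * (t - b) * (t - B) := by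
      intro t
      rw [Qp, ha, hA, hb, hB]
      linear_combination ((1/2)*sm^2*t^2 + (1/8)*sm^4 + (-1/16)*sp^2*sm^4 + (1/2)*zm^2*t^2 + (-1/4)*zm^2*sm^2 + (1/8)*zm^2*sp^2*sm^2 + (1/8)*zm^4 + (-1/16)*zm^4*sp^2 + (1/2)*zp*zm*sm^2*t + (-1/2)*zp*zm^3*t + (1/16)*zp^2*sm^4 + (-1/8)*zp^2*zm^2*sm^2 + (1/16)*zp^2*zm^4) * hsp + ((1/2) - 1*t^2 + (-1/4)*sm^2 + (1/4)*zm^2 - 1*zp*zm*t + 1*zp^2*t^2) * hsm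
    have hQda : ∀ t : ℂ, Qd zp zm t =
        (t - A) * (t - b) * (t - B) + (t - a) * (t - b) * (t - B) +
          (t - a) * (t - A) * (t - B) + (t - a) * (t - A) * (t - b) := by
      intro t
      rw [Qd, ha, hA, hb, hB]
      linear_combination (1*sm^2*t + 1*zm^2*t + (1/2)*zp*zm*sm^2 + (-1/2)*zp*zm^3) * hsp + (-2*t - 1*zp*zm + 2*zp^2*t) * hsm
    have hQa : Qp zp zm a = 0 := by rw [hfac]; ring
    have hQA : Qp zp zm A = 0 := by rw [hfac]; ring
    have hQb : Qp zp zm b = 0 := by rw [hfac]; ring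
    have hQB : Qp zp zm B = 0 := by rw [hfac]; ring
    have hQ1ne : Qp zp zm 1 ≠ 0 := by
      have : Qp zp zm 1 = 2 * (zp - zm) ^ 2 := by rw [Qp]; ring
      rw [this]; exact mul_ne_zero two_ne_zero (pow_ne_zero _ hz1)
    have hQm1ne : Qp zp zm (-1) ≠ 0 := by
      have : Qp zp zm (-1) = 2 * (zp + zm) ^ 2 := by rw [Qp]; ring
      rw [this]; exact mul_ne_zero two_ne_zero (pow_ne_zero _ hz2)
    have not1 : ∀ t : ℂ, Qp zp zm t = 0 → t ≠ 1 ∧ t ≠ -1 := by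
      intro t ht
      constructor <;> intro h <;> rw [h] at ht
      · exact hQ1ne ht
      · exact hQm1ne ht
    constructor
    · ext t
      simp only [Set.mem_setOf_eq, Set.mem_insert_iff, Set.mem_singleton_iff, hainv, hbinv]
      constructor
      · rintro ⟨ht0, ht1, htm1, hF⟩
        have h1s : (1 : ℂ) - t ≠ 0 := sub_ne_zero.mpr (Ne.symm ht1)
        have h2s : (1 : ℂ) + t ≠ 0 := fun h => htm1 (by linear_combination h)
        have hQ : Qp zp zm t = 0 := (Fd1_zero_iff zp zm t ht0 h1s h2s).mp hF
        rw [hfac t] at hQ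
        rcases mul_eq_zero.mp hQ with h | h
        · rcases mul_eq_zero.mp h with h | h
          · rcases mul_eq_zero.mp h with h | h
            · exact Or.inl (sub_eq_zero.mp h)
            · exact Or.inr (Or.inl (sub_eq_zero.mp h))
          · exact Or.inr (Or.inr (Or.inl (sub_eq_zero.mp h)))
        · exact Or.inr (Or.inr (Or.inr (sub_eq_zero.mp h)))
      · have key : ∀ u : ℂ, u ≠ 0 → Qp zp zm u = 0 →
            u ≠ 0 ∧ u ≠ 1 ∧ u ≠ -1 ∧ Fd1 zp zm u = 0 := by
          intro u hu0 hQ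
          obtain ⟨hu1, hum1⟩ := not1 u hQ
          have h1s : (1 : ℂ) - u ≠ 0 := sub_ne_zero.mpr (Ne.symm hu1)
          have h2s : (1 : ℂ) + u ≠ 0 := fun h => hum1 (by linear_combination h)
          exact ⟨hu0, hu1, hum1, (Fd1_zero_iff zp zm u hu0 h1s h2s).mpr hQ⟩
        rintro (h | h | h | h) <;> rw [h]
        · exact key a ha0 hQa
        · exact key A hA0 hQA
        · exact key b hb0 hQb
        · exact key B hB0 hQB
    · intro t ht
      simp only [Set.mem_insert_iff, Set.mem_singleton_iff, hainv, hbinv] at ht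
      rcases ht with h | h | h | h <;> rw [h]
      · obtain ⟨h1, h2⟩ := not1 a hQa
        refine hFd2ne a ha0 h1 h2 hQa ?_
        have : Qd zp zm a = (a - A) * (a - b) * (a - B) := by rw [hQda]; ring
        rw [this]
        exact mul_ne_zero (mul_ne_zero hd1ne hd3ne) hd4ne
      · obtain ⟨h1, h2⟩ := not1 A hQA
        refine hFd2ne A hA0 h1 h2 hQA ?_
        have : Qd zp zm A = (A - a) * (A - b) * (A - B) := by rw [hQda]; ring
        rw [this]
        have : A - a ≠ 0 := fun h => hd1ne (by linear_combination -h)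
        exact mul_ne_zero (mul_ne_zero this hd5ne) hd6ne
      · obtain ⟨h1, h2⟩ := not1 b hQb
        refine hFd2ne b hb0 h1 h2 hQb ?_
        have : Qd zp zm b = (b - a) * (b - A) * (b - B) := by rw [hQda]; ring
        rw [this]
        have h3 : b - a ≠ 0 := fun h => hd3ne (by linear_combination -h)
        have h5 : b - A ≠ 0 := fun h => hd5ne (by linear_combination -h)
        exact mul_ne_zero (mul_ne_zero h3 h5) hd2ne
      · obtain ⟨h1, h2⟩ := not1 B hQB
        refine hFd2ne B hB0 h1 h2 hQB ?_
        have : Qd zp zm B = (B - a) * (B - A) * (B - b) := by rw [hQda]; ring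
        rw [this]
        have h4 : B - a ≠ 0 := fun h => hd4ne (by linear_combination -h)
        have h6 : B - A ≠ 0 := fun h => hd6ne (by linear_combination -h)
        have h2' : B - b ≠ 0 := fun h => hd2ne (by linear_combination -h)
        exact mul_ne_zero (mul_ne_zero h4 h6) h2'
  · -- case (ii)
    intro ε hεc hzpε hzp0
    have hε2 : ε ^ 2 = 1 := by rcases hεc with rfl | rfl <;> norm_num
    have hε0 : ε ≠ 0 := by rcases hεc with rfl | rfl <;> norm_num
    have hzm : zm = ε * zp := by linear_combination (-ε) * hzpε + (-zm) * hε2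
    have hcc : (ε * (zp + sp) ^ 2 / 2) * (ε * (zp - sp) ^ 2 / 2) = 1 := by
      linear_combination ((-1/2)*ε^2 + (1/4)*sp^2*ε^2 + (-1/4)*zp^2*ε^2) * hsp + (1) * hε2
    have hc0 : ε * (zp + sp) ^ 2 / 2 ≠ 0 := left_ne_zero_of_mul_eq_one hcc
    have hc0' : ε * (zp - sp) ^ 2 / 2 ≠ 0 := right_ne_zero_of_mul_eq_one hcc
    have hfac2 : ∀ t : ℂ, Qp zp zm t =
        (t - ε * (zp + sp) ^ 2 / 2) * (t - ε * (zp - sp) ^ 2 / 2) * (t - ε) ^ 2 := by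
      intro t
      rw [Qp, hzm]
      linear_combination ((1/2)*ε^4 + (-3/2)*t^2*ε^2 + 1*t^3*ε + (-1/4)*sp^2*ε^4 + (1/2)*sp^2*t*ε^3 + (-1/4)*sp^2*t^2*ε^2 + (1/4)*zp^2*ε^4 + (-1/2)*zp^2*t*ε^3 + (1/4)*zp^2*t^2*ε^2) * hsp + (-1 - 1*ε^2 + 2*t^2 + 2*zp^2*t*ε - 2*zp^2*t^2) * hε2
    have hQd2 : ∀ t : ℂ, Qd zp zm t =
        (t - ε * (zp - sp) ^ 2 / 2) * (t - ε) ^ 2 + (t - ε * (zp + sp) ^ 2 / 2) * (t - ε) ^ 2 +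
          2 * (t - ε * (zp + sp) ^ 2 / 2) * (t - ε * (zp - sp) ^ 2 / 2) * (t - ε) := by
      intro t
      rw [Qd, hzm]
      linear_combination (-3*t*ε^2 + 3*t^2*ε + (1/2)*sp^2*ε^3 + (-1/2)*sp^2*t*ε^2 + (-1/2)*zp^2*ε^3 + (1/2)*zp^2*t*ε^2) * hsp + (4*t + 2*zp^2*ε - 4*zp^2*t) * hε2
    have hcI : ε * (zp + sp) ^ 2 / 2 - ε = ε * sp * (zp + sp) := by
      linear_combination (-(ε/2)) * hsp
    have hcJ : ε * (zp + sp) ^ 2 / 2 + ε = ε * zp * (zp + sp) := by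
      linear_combination (ε/2) * hsp
    have hcK : ε * (zp - sp) ^ 2 / 2 - ε = -(ε * sp * (zp - sp)) := by
      linear_combination (-(ε/2)) * hsp
    have hcL : ε * (zp - sp) ^ 2 / 2 + ε = ε * zp * (zp - sp) := by
      linear_combination (ε/2) * hsp
    have hcIne : ε * (zp + sp) ^ 2 / 2 - ε ≠ 0 := by
      rw [hcI]; exact mul_ne_zero (mul_ne_zero hε0 hsp0) hzpspne
    have hcJne : ε * (zp + sp) ^ 2 / 2 + ε ≠ 0 := by
      rw [hcJ]; exact mul_ne_zero (mul_ne_zero hε0 hzp0) hzpspne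
    have hcKne : ε * (zp - sp) ^ 2 / 2 - ε ≠ 0 := by
      rw [hcK]; exact neg_ne_zero.mpr (mul_ne_zero (mul_ne_zero hε0 hsp0) hzpsmne)
    have hcLne : ε * (zp - sp) ^ 2 / 2 + ε ≠ 0 := by
      rw [hcL]; exact mul_ne_zero (mul_ne_zero hε0 hzp0) hzpsmne
    have generic : ∀ t : ℂ, t - ε ≠ 0 → t + ε ≠ 0 → t ≠ 1 ∧ t ≠ -1 := by
      intro t h1 h2
      rcases hεc with rfl | rfl
      · exact ⟨fun h => h1 (by rw [h]; ring), fun h => h2 (by rw [h]; ring)⟩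
      · exact ⟨fun h => h2 (by rw [h]; ring), fun h => h1 (by rw [h]; ring)⟩
    obtain ⟨hc1, hcm1⟩ := generic _ hcIne hcJne
    obtain ⟨hc1', hcm1'⟩ := generic _ hcKne hcLne
    have hQc : Qp zp zm (ε * (zp + sp) ^ 2 / 2) = 0 := by rw [hfac2]; ring
    have hQc' : Qp zp zm (ε * (zp - sp) ^ 2 / 2) = 0 := by rw [hfac2]; ring
    have hdiff : ε * (zp + sp) ^ 2 / 2 - ε * (zp - sp) ^ 2 / 2 = 2 * zp * sp * ε := by ring
    have hdiffne : ε * (zp + sp) ^ 2 / 2 - ε * (zp - sp) ^ 2 / 2 ≠ 0 := by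
      rw [hdiff]
      exact mul_ne_zero (mul_ne_zero (mul_ne_zero two_ne_zero hzp0) hsp0) hε0
    refine ⟨?_, sub_ne_zero.mp hdiffne, hcc, ?_, ?_⟩
    · ext t
      simp only [Set.mem_setOf_eq, Set.mem_insert_iff, Set.mem_singleton_iff]
      constructor
      · rintro ⟨ht0, ht1, htm1, hF⟩
        have h1s : (1 : ℂ) - t ≠ 0 := sub_ne_zero.mpr (Ne.symm ht1)
        have h2s : (1 : ℂ) + t ≠ 0 := fun h => htm1 (by linear_combination h)
        have hQ : Qp zp zm t = 0 := (Fd1_zero_iff zp zm t ht0 h1s h2s).mp hF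
        rw [hfac2 t] at hQ
        rcases mul_eq_zero.mp hQ with h | h
        · rcases mul_eq_zero.mp h with h | h
          · exact Or.inl (sub_eq_zero.mp h)
          · exact Or.inr (sub_eq_zero.mp h)
        · exfalso
          have hε' : t = ε := sub_eq_zero.mp (pow_eq_zero_iff two_ne_zero |>.mp h)
          rcases hεc with rfl | rfl
          · exact ht1 hε'
          · exact htm1 hε'
      · have key : ∀ u : ℂ, u ≠ 0 → u ≠ 1 → u ≠ -1 → Qp zp zm u = 0 →
            u ≠ 0 ∧ u ≠ 1 ∧ u ≠ -1 ∧ Fd1 zp zm u = 0 := by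
          intro u hu0 hu1 hum1 hQ
          have h1s : (1 : ℂ) - u ≠ 0 := sub_ne_zero.mpr (Ne.symm hu1)
          have h2s : (1 : ℂ) + u ≠ 0 := fun h => hum1 (by linear_combination h)
          exact ⟨hu0, hu1, hum1, (Fd1_zero_iff zp zm u hu0 h1s h2s).mpr hQ⟩
        rintro (rfl | rfl)
        · exact key _ hc0 hc1 hcm1 hQc
        · exact key _ hc0' hc1' hcm1' hQc'
    · refine hFd2ne _ hc0 hc1 hcm1 hQc ?_
      have : Qd zp zm (ε * (zp + sp) ^ 2 / 2) =
          (ε * (zp + sp) ^ 2 / 2 - ε * (zp - sp) ^ 2 / 2) * (ε * (zp + sp) ^ 2 / 2 - ε) ^ 2 := by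
        rw [hQd2]; ring
      rw [this]
      exact mul_ne_zero hdiffne (pow_ne_zero _ hcIne)
    · refine hFd2ne _ hc0' hc1' hcm1' hQc' ?_
      have : Qd zp zm (ε * (zp - sp) ^ 2 / 2) =
          (ε * (zp - sp) ^ 2 / 2 - ε * (zp + sp) ^ 2 / 2) * (ε * (zp - sp) ^ 2 / 2 - ε) ^ 2 := by
        rw [hQd2]; ring
      rw [this]
      refine mul_ne_zero (fun h => hdiffne (by linear_combination -h)) (pow_ne_zero _ hcKne)
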